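/- Let Ω = {x ∈ ℝⁿ : xₙ > λ(x')} be a special Lipschitz domain with Lipschitz constant A, let 0 < σ with σA < 1, let a > 0, and set β = a(1 − σA)/√(1 + A²). Suppose y ∈ ℝⁿ satisfies |y'| ≤ σ yₙ and yₙ ≥ a t for some t > 0, and suppose w ∈ ℝⁿ satisfies wₙ ≤ A|w'|. Then |y − w| ≥ β t. -/
import Mathlib


/-- Core geometric estimate: if `σ A < 1`, `β = a(1-σA)/√(1+A²)`,
`y = (y', yₙ)` satisfies `|y'| ≤ σ yₙ` and `yₙ ≥ a t` for some `t > 0`, and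
`w = (w', wₙ)` satisfies `wₙ ≤ A |w'|`, then `|y - w| ≥ β t`
(Euclidean distance `|y - w| = √(|y' - w'|² + (yₙ - wₙ)²)`). -/
theorem cone_graph_separation (d : ℕ) (A σ a t : ℝ)
    (hA : 0 ≤ A) (hσ : 0 < σ) (hσA : σ * A < 1) (ha : 0 < a) (ht : 0 < t)
    (y' w' : EuclideanSpace ℝ (Fin d)) (yn wn : ℝ)
    (hy : ‖y'‖ ≤ σ * yn) (hyn : a * t ≤ yn) (hw : wn ≤ A * ‖w'‖) :
    a * (1 - σ * A) / Real.sqrt (1 + A ^ 2) * t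
      ≤ Real.sqrt (‖y' - w'‖ ^ 2 + (yn - wn) ^ 2) := by
  set r := ‖y' - w'‖ with hr
  set s := yn - wn with hs
  have hr0 : 0 ≤ r := norm_nonneg _
  have hyn0 : 0 < yn := lt_of_lt_of_le (by positivity) hyn
  set c := (1 - σ * A) * yn with hc
  have hc0 : 0 < c := by
    have : 0 < 1 - σ * A := by linarith
    positivity
  have hw' : ‖w'‖ ≤ ‖y'‖ + r := by
    have : w' = y' - (y' - w') := by abel
    calc ‖w'‖ = ‖y' - (y' - w')‖ := by rw [← this]
    _ ≤ ‖y'‖ + ‖y' - w'‖ := norm_sub_le _ _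
  have hsr : c - A * r ≤ s := by
    have h1 : wn ≤ A * (‖y'‖ + r) := hw.trans (by nlinarith)
    have h2 : A * ‖y'‖ ≤ A * (σ * yn) := by nlinarith
    simp only [hs, hc]; nlinarith
  -- key squared inequality
  have hkey : c ^ 2 ≤ (1 + A ^ 2) * (r ^ 2 + s ^ 2) := by
    rcases le_or_gt c (A * r) with h | h
    · nlinarith [sq_nonneg s, sq_nonneg r]
    · have hs0 : 0 < s := lt_of_lt_of_le (by linarith) hsr
      have h2 : (c - A * r) ^ 2 ≤ s ^ 2 := by nlinarith
      nlinarith [sq_nonneg ((1 + A ^ 2) * r - A * c)]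
  have hsq : 0 < Real.sqrt (1 + A ^ 2) := Real.sqrt_pos.mpr (by positivity)
  rw [div_mul_eq_mul_div, div_le_iff₀ hsq]
  have hD : c ≤ Real.sqrt (r ^ 2 + s ^ 2) * Real.sqrt (1 + A ^ 2) := by
    rw [← Real.sqrt_mul_self hc0.le]
    rw [← Real.sqrt_mul (by positivity)]
    apply Real.sqrt_le_sqrt
    nlinarith
  calc a * (1 - σ * A) * t ≤ c := by nlinarith
  _ ≤ _ := hD
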